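/- arXiv:2204.05176 — 2 statements merged into one kernel-verified Lean document; each statement's English description precedes it below -/
import Mathlib

section
/- Consider a finite discounted CMDP and a constraint threshold b ∈ ℝ. Suppose π* is a policy with V_c^{π*}(ρ) ≥ b, and λ* ≥ 0 satisfies strong duality in the sense that V_r^π(ρ) + λ*·(V_c^π(ρ) − b) ≤ V_r^{π*}(ρ) for every policy π. Let π̃ be any policy and set ζ = V_c^{π̃}(ρ) − b. If ζ > 0, then λ* ≤ (V_r^{π*}(ρ) − V_r^{π̃}(ρ))/ζ ≤ 1/(ζ·(1−γ)). -/
open scoped BigOperators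
open Matrix Finset

noncomputable section CMDP

variable {S A : Type*} [Fintype S] [Fintype A] [DecidableEq S]

/-- `P` is a transition kernel: `P s a` is a probability vector on states. -/
def isKernel (P : S → A → S → ℝ) : Prop :=
  ∀ s a, (∀ s', 0 ≤ P s a s') ∧ (∑ s', P s a s') = 1

/-- `π` is a (memoryless, stochastic) policy. -/
def isPolicy (π : S → A → ℝ) : Prop :=
  ∀ s, (∀ a, 0 ≤ π s a) ∧ (∑ a, π s a) = 1

/-- `ρ` is a probability vector on states. -/
def isProbVec (ρ : S → ℝ) : Prop :=
  (∀ s, 0 ≤ ρ s) ∧ (∑ s, ρ s) = 1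

/-- The transition matrix `P_π` induced by a policy. -/
def Pmat (P : S → A → S → ℝ) (π : S → A → ℝ) : Matrix S S ℝ :=
  Matrix.of fun s s' => ∑ a, π s a * P s a s'

/-- State-wise expected reward `r_π`. -/
def rvec (r : S → A → ℝ) (π : S → A → ℝ) : S → ℝ :=
  fun s => ∑ a, π s a * r s a

/-- The value vector `V^π = (I - γ P_π)⁻¹ r_π`. -/
def Vvec (γ : ℝ) (P : S → A → S → ℝ) (r : S → A → ℝ) (π : S → A → ℝ) : S → ℝ :=
  ((1 : Matrix S S ℝ) - γ • Pmat P π)⁻¹ *ᵥ rvec r π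

/-- The scalar value `V^π(ρ)`. -/
def Vval (γ : ℝ) (P : S → A → S → ℝ) (r : S → A → ℝ) (ρ : S → ℝ) (π : S → A → ℝ) : ℝ :=
  ∑ s, ρ s * Vvec γ P r π s

/-- The action-value function `Q^π(s,a) = r(s,a) + γ ∑_{s'} P(s'|s,a) V^π(s')`. -/
def Qfun (γ : ℝ) (P : S → A → S → ℝ) (r : S → A → ℝ) (π : S → A → ℝ) : S → A → ℝ :=
  fun s a => r s a + γ * ∑ s', P s a s' * Vvec γ P r π s'

/-- The normalized discounted occupancy measure `ν_{ρ,π} = (1-γ) ρᵀ (I - γ P_π)⁻¹`. -/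
def occMeas (γ : ℝ) (P : S → A → S → ℝ) (ρ : S → ℝ) (π : S → A → ℝ) : S → ℝ :=
  fun s => (1 - γ) * (ρ ᵥ* ((1 : Matrix S S ℝ) - γ • Pmat P π)⁻¹) s

end CMDP

/-! Strong duality at `π̃` gives `λ* ζ ≤ V_r^{π*}(ρ) - V_r^{π̃}(ρ)`, and this gap is at most
`1/(1-γ)` because every reward value lies in `[0, 1/(1-γ)]`. The latter follows from the Bellman
equation `V = r_π + γ P_π V` and the maximum principle for a row-stochastic `P_π`, which also
shows that `I - γ P_π` is invertible. -/

namespace Matrix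

variable {R n : Type*} [Field R] [LinearOrder R] [IsStrictOrderedRing R]
  [Fintype n] [DecidableEq n] {M : Matrix n n R} {γ : R}

lemma mulVec_le_of_mem_rowStochastic (hM : M ∈ rowStochastic R n) {v : n → R} {m : R}
    (hv : ∀ j, v j ≤ m) (i : n) : (M *ᵥ v) i ≤ m :=
  calc (M *ᵥ v) i = ∑ j, M i j * v j := rfl
    _ ≤ ∑ j, M i j * m := by
      gcongr with j; exacts [nonneg_of_mem_rowStochastic hM, hv j]
    _ = m := by rw [← Finset.sum_mul, sum_row_of_mem_rowStochastic hM, one_mul]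

/-- Maximum principle: at a maximiser `j` of `v`, `(M v) j` is a convex combination of values of
`v`, hence at most `v j`. -/
lemma le_div_one_sub_of_le_add_smul_mulVec (hM : M ∈ rowStochastic R n)
    (hγ0 : 0 ≤ γ) (hγ1 : γ < 1) {v : n → R} {k : R}
    (hv : ∀ i, v i ≤ k + γ * (M *ᵥ v) i) (i : n) : v i ≤ k / (1 - γ) := by
  obtain ⟨j, -, hj⟩ := Finset.exists_max_image Finset.univ v ⟨i, Finset.mem_univ i⟩
  have hMv : (M *ᵥ v) j ≤ v j :=
    mulVec_le_of_mem_rowStochastic hM (fun l => hj l (Finset.mem_univ l)) j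
  have hvj : v j * (1 - γ) ≤ k := by nlinarith [hv j]
  exact (hj i (Finset.mem_univ i)).trans ((le_div_iff₀ (by linarith)).2 hvj)

lemma isUnit_det_one_sub_smul_of_mem_rowStochastic (hM : M ∈ rowStochastic R n)
    (hγ0 : 0 ≤ γ) (hγ1 : γ < 1) : IsUnit (1 - γ • M).det := by
  refine isUnit_iff_ne_zero.2 fun hdet => ?_
  obtain ⟨v, hv0, hv⟩ := exists_mulVec_eq_zero_iff.2 hdet
  have hfix : ∀ w : n → R, w = γ • M *ᵥ w → ∀ i, w i ≤ 0 := fun w hw i => by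
    simpa using le_div_one_sub_of_le_add_smul_mulVec hM hγ0 hγ1 (k := 0)
      (fun j => by simpa using (congrFun hw j).le) i
  have hv' : v = γ • M *ᵥ v := by
    rwa [sub_mulVec, one_mulVec, smul_mulVec, sub_eq_zero] at hv
  have hneg : -v = γ • M *ᵥ -v := by rw [mulVec_neg, smul_neg, ← hv']
  exact hv0 (funext fun i => le_antisymm (hfix v hv' i) (by simpa using hfix (-v) hneg i))

end Matrix

section ValueBounds

open Matrix

variable {S A : Type*} [Fintype A]

lemma rvec_mem_Icc {r : S → A → ℝ} (hr : ∀ s a, r s a ∈ Set.Icc (0 : ℝ) 1) {π : S → A → ℝ}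
    (hπ : isPolicy π) (s : S) : rvec r π s ∈ Set.Icc (0 : ℝ) 1 := by
  refine ⟨Finset.sum_nonneg fun a _ => mul_nonneg ((hπ s).1 a) (hr s a).1, ?_⟩
  calc rvec r π s ≤ ∑ a, π s a * 1 :=
        Finset.sum_le_sum fun a _ => mul_le_mul_of_nonneg_left (hr s a).2 ((hπ s).1 a)
    _ = 1 := by simp [(hπ s).2]

variable [Fintype S] [DecidableEq S]

lemma Pmat_mem_rowStochastic {P : S → A → S → ℝ} (hP : isKernel P) {π : S → A → ℝ}
    (hπ : isPolicy π) : Pmat P π ∈ rowStochastic ℝ S := by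
  refine mem_rowStochastic_iff_sum.2
    ⟨fun s s' => Finset.sum_nonneg fun a _ => mul_nonneg ((hπ s).1 a) ((hP s a).1 s'), fun s => ?_⟩
  simp only [Pmat, of_apply]
  rw [Finset.sum_comm]
  simp_rw [← Finset.mul_sum, (hP _ _).2, mul_one, (hπ s).2]

lemma Vvec_eq_rvec_add {γ : ℝ} (hγ0 : 0 ≤ γ) (hγ1 : γ < 1) {P : S → A → S → ℝ}
    (hP : isKernel P) (r : S → A → ℝ) {π : S → A → ℝ} (hπ : isPolicy π) (s : S) :
    Vvec γ P r π s = rvec r π s + γ * (Pmat P π *ᵥ Vvec γ P r π) s := by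
  have hunit := isUnit_det_one_sub_smul_of_mem_rowStochastic (Pmat_mem_rowStochastic hP hπ) hγ0 hγ1
  have h : (1 - γ • Pmat P π) *ᵥ Vvec γ P r π = rvec r π := by
    rw [Vvec, mulVec_mulVec, mul_nonsing_inv _ hunit, one_mulVec]
  have hs := congrFun h s
  simp only [sub_mulVec, one_mulVec, smul_mulVec, Pi.sub_apply, Pi.smul_apply, smul_eq_mul] at hs
  linarith

lemma Vvec_mem_Icc {γ : ℝ} (hγ0 : 0 ≤ γ) (hγ1 : γ < 1) {P : S → A → S → ℝ}
    (hP : isKernel P) {r : S → A → ℝ} (hr : ∀ s a, r s a ∈ Set.Icc (0 : ℝ) 1)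
    {π : S → A → ℝ} (hπ : isPolicy π) (s : S) :
    Vvec γ P r π s ∈ Set.Icc 0 (1 / (1 - γ)) := by
  have hM := Pmat_mem_rowStochastic hP hπ
  have hV := Vvec_eq_rvec_add hγ0 hγ1 hP r hπ
  constructor
  · have := le_div_one_sub_of_le_add_smul_mulVec hM hγ0 hγ1 (v := -Vvec γ P r π) (k := 0)
      (fun i => by simp only [mulVec_neg, Pi.neg_apply, hV i]; linarith [(rvec_mem_Icc hr hπ i).1]) s
    simpa using this
  · exact le_div_one_sub_of_le_add_smul_mulVec hM hγ0 hγ1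
      (fun i => by rw [hV i]; linarith [(rvec_mem_Icc hr hπ i).2]) s

lemma Vval_mem_Icc {γ : ℝ} (hγ0 : 0 ≤ γ) (hγ1 : γ < 1) {P : S → A → S → ℝ}
    (hP : isKernel P) {r : S → A → ℝ} (hr : ∀ s a, r s a ∈ Set.Icc (0 : ℝ) 1)
    {ρ : S → ℝ} (hρ : isProbVec ρ) {π : S → A → ℝ} (hπ : isPolicy π) :
    Vval γ P r ρ π ∈ Set.Icc 0 (1 / (1 - γ)) := by
  have hV := Vvec_mem_Icc hγ0 hγ1 hP hr hπ
  refine ⟨Finset.sum_nonneg fun s _ => mul_nonneg (hρ.1 s) (hV s).1, ?_⟩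
  calc Vval γ P r ρ π ≤ ∑ s, ρ s * (1 / (1 - γ)) :=
        Finset.sum_le_sum fun s _ => mul_le_mul_of_nonneg_left (hV s).2 (hρ.1 s)
    _ = 1 / (1 - γ) := by rw [← Finset.sum_mul, hρ.2, one_mul]

end ValueBounds

theorem dual_variable_bound_general
    {S A : Type*} [Fintype S] [Fintype A] [DecidableEq S]
    (γ : ℝ) (hγ0 : 0 ≤ γ) (hγ1 : γ < 1)
    (P : S → A → S → ℝ) (hP : isKernel P)
    (r : S → A → ℝ) (hr : ∀ s a, r s a ∈ Set.Icc (0 : ℝ) 1)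
    (c : S → A → ℝ)
    (ρ : S → ℝ) (hρ : isProbVec ρ)
    (b : ℝ)
    (πs : S → A → ℝ) (hπs : isPolicy πs)
    (lamStar : ℝ)
    (hsd : ∀ π : S → A → ℝ, isPolicy π →
      Vval γ P r ρ π + lamStar * (Vval γ P c ρ π - b) ≤ Vval γ P r ρ πs)
    (πtil : S → A → ℝ) (hπtil : isPolicy πtil)
    (ζ : ℝ) (hζ : ζ = Vval γ P c ρ πtil - b) (hζpos : 0 < ζ) :
    lamStar ≤ (Vval γ P r ρ πs - Vval γ P r ρ πtil) / ζ ∧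
      (Vval γ P r ρ πs - Vval γ P r ρ πtil) / ζ ≤ 1 / (ζ * (1 - γ)) := by
  have hsdtil := hsd πtil hπtil
  rw [← hζ] at hsdtil
  have hgap : Vval γ P r ρ πs - Vval γ P r ρ πtil ≤ 1 / (1 - γ) := by
    linarith [(Vval_mem_Icc hγ0 hγ1 hP hr hρ hπs).2, (Vval_mem_Icc hγ0 hγ1 hP hr hρ hπtil).1]
  refine ⟨(le_div_iff₀ hζpos).2 (by linarith), ?_⟩
  calc (Vval γ P r ρ πs - Vval γ P r ρ πtil) / ζ ≤ 1 / (1 - γ) / ζ := by gcongr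
    _ = 1 / (ζ * (1 - γ)) := by rw [div_div, mul_comm]

/-- bound on the optimal dual variable. -/
theorem dual_variable_bound
    {S A : Type*} [Fintype S] [Fintype A] [DecidableEq S] [Nonempty S] [Nonempty A]
    (γ : ℝ) (hγ0 : 0 ≤ γ) (hγ1 : γ < 1)
    (P : S → A → S → ℝ) (hP : isKernel P)
    (r : S → A → ℝ) (hr : ∀ s a, r s a ∈ Set.Icc (0 : ℝ) 1)
    (c : S → A → ℝ) (hc : ∀ s a, c s a ∈ Set.Icc (0 : ℝ) 1)
    (ρ : S → ℝ) (hρ : isProbVec ρ)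
    (b : ℝ)
    (πs : S → A → ℝ) (hπs : isPolicy πs)
    (hfeas : b ≤ Vval γ P c ρ πs)
    (lamStar : ℝ) (hlamStar : 0 ≤ lamStar)
    (hsd : ∀ π : S → A → ℝ, isPolicy π →
      Vval γ P r ρ π + lamStar * (Vval γ P c ρ π - b) ≤ Vval γ P r ρ πs)
    (πtil : S → A → ℝ) (hπtil : isPolicy πtil)
    (ζ : ℝ) (hζ : ζ = Vval γ P c ρ πtil - b) (hζpos : 0 < ζ) :
    lamStar ≤ (Vval γ P r ρ πs - Vval γ P r ρ πtil) / ζ ∧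
      (Vval γ P r ρ πs - Vval γ P r ρ πtil) / ζ ≤ 1 / (ζ * (1 - γ)) :=
  dual_variable_bound_general γ hγ0 hγ1 P hP r hr c ρ hρ b πs hπs lamStar hsd πtil hπtil ζ hζ hζpos
end

section
/- (Constraint violation bound.) Let Π be a nonempty set, let R, C : Π → ℝ with R bounded above, and let b ∈ ℝ. Assume the feasible set {π ∈ Π : C(π) ≥ b} is nonempty and let R* = sup{R(π) : π ∈ Π, C(π) ≥ b}. Assume λ* ≥ 0 satisfies: R(π) + λ*·(C(π) − b) ≤ R* for every π ∈ Π. Let K > λ*, β ∈ ℝ, and let π̃ ∈ Π satisfy R* − R(π̃) + K·[b − C(π̃)]_+ ≤ β. Then [b − C(π̃)]_+ ≤ β/(K − λ*). -/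
/-- Constraint violation bound. -/
theorem constraint_violation_bound {Pol : Type*} [Nonempty Pol]
    (R C : Pol → ℝ) (hbdd : BddAbove (Set.range R)) (b : ℝ)
    (hfeas : ∃ π, b ≤ C π)
    (Rstar : ℝ) (hRstar : Rstar = sSup (R '' {π | b ≤ C π}))
    (lamStar : ℝ) (hlamStar : 0 ≤ lamStar)
    (hsd : ∀ π, R π + lamStar * (C π - b) ≤ Rstar)
    (K β : ℝ) (hK : lamStar < K)
    (πtil : Pol) (hπtil : Rstar - R πtil + K * max (b - C πtil) 0 ≤ β) :
    max (b - C πtil) 0 ≤ β / (K - lamStar) := by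
  have hpos : 0 < K - lamStar := by linarith
  rw [le_div_iff₀ hpos]
  have h1 := hsd πtil
  have h2 : b - C πtil ≤ max (b - C πtil) 0 := le_max_left _ _
  nlinarith [le_max_right (b - C πtil) 0]
end
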